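/- For every real α, every t > 0, every x > 0 and every integer k ≥ 1, one has e^{αt} · ∫₀^∞ f_k(x₀, x; t; α) dx₀ = (1/(k−1)!) · (x/β(t;α))^{k−1} · e^{−x/β(t;α)}. (This is Theorem 8: under an improper uniform prior on the initial population X(0), the number of initial ancestors of a current population X(t) = x > 0 has a shifted Poisson distribution with parameter x/β(t).) -/

import Mathlib

open MeasureTheory Real Filter Set

/-- `muF t α` is the function μ(t;α) = 2α e^{αt}/(e^{αt} − 1) for α ≠ 0, and 2/t for α = 0. -/
noncomputable def muF (t α : ℝ) : ℝ :=
  if α = 0 then 2 / t else 2 * α * Real.exp (α * t) / (Real.exp (α * t) - 1)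

/-- `betaF t α` is the function β(t;α) = (e^{αt} − 1)/(2α) for α ≠ 0, and t/2 for α = 0. -/
noncomputable def betaF (t α : ℝ) : ℝ :=
  if α = 0 then t / 2 else (Real.exp (α * t) - 1) / (2 * α)

/-- `fl l x₀ x t α` is the term f_l(x₀, x; t; α), the joint density contribution from `l`
founding families. -/
noncomputable def fl (l : ℕ) (x₀ x t α : ℝ) : ℝ :=
  Real.exp (-(x₀ * muF t α)) * (x₀ * muF t α) ^ l / (Nat.factorial l : ℝ) *
    (x ^ (l - 1) * Real.exp (-(x / betaF t α)) / (betaF t α ^ l * (Nat.factorial (l - 1) : ℝ)))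

/-- `fplus x₀ x t α` = ∑_{l=1}^∞ f_l(x₀, x; t; α), the absolutely continuous part of the
Feller-diffusion transition density. -/
noncomputable def fplus (x₀ x t α : ℝ) : ℝ := ∑' l : ℕ, fl (l + 1) x₀ x t α

lemma exp_sub_one_div_pos {α t : ℝ} (ht : 0 < t) (hα : α ≠ 0) :
    0 < (Real.exp (α * t) - 1) / (2 * α) := by
  rcases lt_or_gt_of_ne hα with h | h
  · apply div_pos_of_neg_of_neg
    · simpa using Real.exp_lt_one_iff.mpr (by nlinarith)
    · linarith
  · apply div_pos
    · have h2 := Real.add_one_lt_exp (ne_of_gt (show (0:ℝ) < α*t by positivity))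
      nlinarith
    · linarith

lemma betaF_pos {α t : ℝ} (ht : 0 < t) : 0 < betaF t α := by
  unfold betaF
  split_ifs with h
  · linarith
  · exact exp_sub_one_div_pos ht h

lemma muF_pos {α t : ℝ} (ht : 0 < t) : 0 < muF t α := by
  unfold muF
  split_ifs with h
  · positivity
  · have h2 := exp_sub_one_div_pos ht h
    have : 2 * α * Real.exp (α * t) / (Real.exp (α * t) - 1)
        = Real.exp (α * t) / ((Real.exp (α * t) - 1) / (2 * α)) := by
      field_simp
    rw [this]
    exact div_pos (Real.exp_pos _) h2

lemma muF_mul_betaF {α t : ℝ} (ht : 0 < t) : muF t α * betaF t α = Real.exp (α * t) := by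
  unfold muF betaF
  split_ifs with h
  · subst h; simp; exact ht.ne'
  · have h1 : Real.exp (α * t) - 1 ≠ 0 := by
      have := exp_sub_one_div_pos ht h
      intro hc; rw [hc] at this; simp at this
    field_simp

theorem stmt16 (α t x : ℝ) (ht : 0 < t) (hx : 0 < x) (k : ℕ) (hk : 1 ≤ k) :
    Real.exp (α * t) * ∫ x₀ in Set.Ioi (0 : ℝ), fl k x₀ x t α
      = (1 / (Nat.factorial (k - 1) : ℝ)) * (x / betaF t α) ^ (k - 1) *
          Real.exp (-(x / betaF t α)) := by
  set μ := muF t α with hμdef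
  set β := betaF t α with hβdef
  have hμ : 0 < μ := muF_pos ht
  have hβ : 0 < β := betaF_pos ht
  have hmb : μ * β = Real.exp (α * t) := muF_mul_betaF ht
  have hint : ∫ x₀ in Set.Ioi (0 : ℝ), x₀ ^ ((k : ℝ) + 1 - 1) * Real.exp (-(μ * x₀))
      = (1/μ) ^ ((k:ℝ)+1) * Real.Gamma ((k:ℝ)+1) :=
    integral_rpow_mul_exp_neg_mul_Ioi (by positivity) hμ
  have hint2 : ∫ x₀ in Set.Ioi (0 : ℝ), x₀ ^ k * Real.exp (-(μ * x₀))
      = (1/μ) ^ (k+1) * (Nat.factorial k : ℝ) := by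
    have h1 : ((1:ℝ)/μ) ^ ((k:ℝ)+1) = (1/μ)^(k+1) := by
      rw [← Real.rpow_natCast (1/μ) (k+1)]; push_cast; ring_nf
    rw [← h1, ← Real.Gamma_nat_eq_factorial k, ← hint]
    apply setIntegral_congr_fun measurableSet_Ioi
    intro y hy
    simp only [show ((k:ℝ)+1-1) = (k:ℝ) by ring, Real.rpow_natCast]
  have hD : ∀ x₀, fl k x₀ x t α
      = (μ ^ k / (Nat.factorial k : ℝ) * (x ^ (k - 1) * Real.exp (-(x / β)) / (β ^ k * (Nat.factorial (k - 1) : ℝ))))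
        * (x₀ ^ k * Real.exp (-(μ * x₀))) := by
    intro x₀
    unfold fl
    rw [← hμdef, ← hβdef]
    ring_nf
  rw [setIntegral_congr_fun measurableSet_Ioi (fun y _ => hD y), integral_const_mul, hint2]
  rw [← hmb]
  have hfk : (Nat.factorial k : ℝ) ≠ 0 := by positivity
  have hfk1 : (Nat.factorial (k-1) : ℝ) ≠ 0 := by positivity
  field_simp
  obtain ⟨m, rfl⟩ : ∃ m, k = m + 1 := ⟨k - 1, (Nat.succ_pred_eq_of_pos hk).symm⟩
  simp only [Nat.add_sub_cancel] at *
  rw [div_pow, div_pow, one_pow]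
  field_simp
  ring
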